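/- arXiv:2602.16456 — 2 statements merged into one kernel-verified Lean document; each statement's English description precedes it below -/
import Mathlib

section
/- Let W̄ ∈ R^{m×n}, and let U ∈ R^{m×r}, V ∈ R^{n×r} satisfy the coupled fixed-point equations U = W̄ V (VᵀV)⁺ and V = W̄ᵀ U (UᵀU)⁺ (pseudoinverse version, λ = 0). Then U Vᵀ = W̄ P_V = P_U W̄, where P_X = X (XᵀX)⁺ Xᵀ denotes orthogonal projection onto the column space of X. -/
/-!
The first identity is `hU` multiplied by `Vᵀ`; the second is `U` times the transpose of `hV`,
once one knows that the pseudoinverse of the symmetric matrix `UᵀU` is symmetric, which follows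
from the uniqueness of the Moore–Penrose inverse since `Pᵀ` is the pseudoinverse of `Aᵀ`.
-/

open Matrix

/-- `P` is the Moore–Penrose pseudoinverse of `A` (four Penrose conditions). -/
def IsMoorePenrose {r : ℕ} (A P : Matrix (Fin r) (Fin r) ℝ) : Prop :=
  A * P * A = A ∧ P * A * P = P ∧ (A * P)ᵀ = A * P ∧ (P * A)ᵀ = P * A

namespace IsMoorePenrose

variable {r : ℕ} {A P Q : Matrix (Fin r) (Fin r) ℝ}

theorem unique (hP : IsMoorePenrose A P) (hQ : IsMoorePenrose A Q) : P = Q := by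
  obtain ⟨hP1, hP2, hP3, hP4⟩ := hP
  obtain ⟨hQ1, hQ2, hQ3, hQ4⟩ := hQ
  have hPAQ_eq_Q : P * A * Q = Q :=
    calc P * A * Q = (P * A) * (Q * A * Q) := by rw [hQ2]
      _ = ((Q * A) * (P * A))ᵀ * Q := by
          rw [transpose_mul, hP4, hQ4]; simp only [Matrix.mul_assoc]
      _ = (Q * (A * P * A))ᵀ * Q := by simp only [Matrix.mul_assoc]
      _ = (Q * A)ᵀ * Q := by rw [hP1]
      _ = Q := by rw [hQ4, hQ2]
  have hPAQ_eq_P : P * A * Q = P :=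
    calc P * A * Q = (P * A * P) * (A * Q) := by rw [hP2, Matrix.mul_assoc]
      _ = P * ((A * Q) * (A * P))ᵀ := by
          rw [transpose_mul, hP3, hQ3]; simp only [Matrix.mul_assoc]
      _ = P * ((A * Q * A) * P)ᵀ := by simp only [Matrix.mul_assoc]
      _ = P * (A * P) := by rw [hQ1, hP3]
      _ = P := by rw [← Matrix.mul_assoc, hP2]
  rw [← hPAQ_eq_P, hPAQ_eq_Q]

theorem transpose (hP : IsMoorePenrose A P) : IsMoorePenrose Aᵀ Pᵀ := by
  obtain ⟨hP1, hP2, hP3, hP4⟩ := hP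
  refine ⟨?_, ?_, ?_, ?_⟩
  · rw [← transpose_mul, ← transpose_mul, ← Matrix.mul_assoc, hP1]
  · rw [← transpose_mul, ← transpose_mul, ← Matrix.mul_assoc, hP2]
  · rw [← transpose_mul, transpose_transpose, hP4]
  · rw [← transpose_mul, transpose_transpose, hP3]

theorem transpose_eq_self (hA : Aᵀ = A) (hP : IsMoorePenrose A P) : Pᵀ = P :=
  (hA ▸ hP.transpose).unique hP

end IsMoorePenrose

theorem fixed_point_projection_general {m n r : ℕ}
    (Wbar : Matrix (Fin m) (Fin n) ℝ)
    (U : Matrix (Fin m) (Fin r) ℝ) (V : Matrix (Fin n) (Fin r) ℝ)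
    (Pv Pu : Matrix (Fin r) (Fin r) ℝ)
    (hPu : IsMoorePenrose (Uᵀ * U) Pu)
    (hU : U = Wbar * V * Pv)
    (hV : V = Wbarᵀ * U * Pu) :
    U * Vᵀ = Wbar * (V * Pv * Vᵀ) ∧ U * Vᵀ = (U * Pu * Uᵀ) * Wbar := by
  have hPu_symm : Puᵀ = Pu := hPu.transpose_eq_self (by rw [transpose_mul, transpose_transpose])
  constructor
  · rw [hU]
    simp only [Matrix.mul_assoc]
  · conv_lhs => rw [hV]
    rw [transpose_mul, transpose_mul, transpose_transpose, hPu_symm]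
    simp only [Matrix.mul_assoc]

/-- If `U = W̄ V (VᵀV)⁺` and `V = W̄ᵀ U (UᵀU)⁺`, then
`U Vᵀ = W̄ P_V = P_U W̄` where `P_X = X (XᵀX)⁺ Xᵀ`. -/
theorem fixed_point_projection {m n r : ℕ}
    (Wbar : Matrix (Fin m) (Fin n) ℝ)
    (U : Matrix (Fin m) (Fin r) ℝ) (V : Matrix (Fin n) (Fin r) ℝ)
    (Pv Pu : Matrix (Fin r) (Fin r) ℝ)
    (hPv : IsMoorePenrose (Vᵀ * V) Pv)
    (hPu : IsMoorePenrose (Uᵀ * U) Pu)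
    (hU : U = Wbar * V * Pv)
    (hV : V = Wbarᵀ * U * Pu) :
    U * Vᵀ = Wbar * (V * Pv * Vᵀ) ∧ U * Vᵀ = (U * Pu * Uᵀ) * Wbar :=
  fixed_point_projection_general Wbar U V Pv Pu hPu hU hV
end

section
/- Under the same assumptions (alternating least squares on W̄ with warm start V^{(0)} having nonzero overlap with the top-r right singular subspace, σ_r > σ_{r+1}), there exists a constant C > 0 depending on V^{(0)} such that ‖U^{(k)} (V^{(k)})ᵀ - Π_r(W̄)‖_F² ≤ C (σ_{r+1}/σ_r)^{2k} for all k, where Π_r(W̄) is the best rank-r Frobenius approximation of W̄. In particular U^{(k)}(V^{(k)})ᵀ → Π_r(W̄) as k → ∞. -/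
/-!
Both ALS half-steps multiply on the right by invertible Gram inverses, so `U⁽ᵏ⁺¹⁾` has the column
space of `W̄ (W̄ᵀW̄)ᵏ V⁽⁰⁾`; and since `V⁽ᵏ⁺¹⁾ᵀ = (U⁽ᵏ⁺¹⁾ᵀU⁽ᵏ⁺¹⁾)⁻¹ U⁽ᵏ⁺¹⁾ᵀ W̄`, the product
`U⁽ᵏ⁺¹⁾ V⁽ᵏ⁺¹⁾ᵀ` is the orthogonal projection `P` onto that space applied to `W̄`: ALS is subspace
iteration. In SVD coordinates the space is spanned by `Σ (ΣᵀΣ)ᵏ Vᵀ V⁽⁰⁾`. Rescaling this basis on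
the right by the inverse of the top `r × r` block of `Vᵀ V⁽⁰⁾` (invertible by the warm start) and
by `diag(σ₁, …, σ_r)^-(2k+1)` gives `N + Tₖ` with `N = [I; 0]` and `Tₖ` entrywise
`O((σ_{r+1}/σ_r)^(2k+1))`. As `‖P_{N+T} - N Nᵀ‖_F² ≤ 2 ‖T‖_F²` and `Π_r(W̄)` is `N Nᵀ Σ` in these
coordinates, the error `(P - N Nᵀ) Σ` decays at that rate.
-/

open Matrix

noncomputable def froSq {m n : ℕ} (A : Matrix (Fin m) (Fin n) ℝ) : ℝ :=
  Matrix.trace (Aᵀ * A)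

def colSpace {n r : ℕ} (A : Matrix (Fin n) (Fin r) ℝ) : Submodule ℝ (Fin n → ℝ) :=
  Submodule.span ℝ (Set.range Aᵀ)

open Filter
open scoped Matrix.Norms.Frobenius

section Frobenius

variable {ι κ : Type*} [Fintype ι] [Fintype κ]

theorem frobenius_norm_sq_eq_trace (A : Matrix ι κ ℝ) : ‖A‖ ^ 2 = trace (Aᵀ * A) := by
  rw [frobenius_norm_def, ← Real.rpow_natCast, ← Real.rpow_mul (by positivity), Nat.cast_ofNat,
    one_div_mul_cancel two_ne_zero, Real.rpow_one]
  simp only [Real.norm_eq_abs, Real.rpow_two, sq, abs_mul_abs_self, trace, diag, mul_apply,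
    transpose_apply]
  exact Finset.sum_comm

theorem froSq_eq_norm_sq {m n : ℕ} (A : Matrix (Fin m) (Fin n) ℝ) : froSq A = ‖A‖ ^ 2 :=
  (frobenius_norm_sq_eq_trace A).symm

theorem frobenius_norm_le_of_abs_le {A B : Matrix ι κ ℝ} {c : ℝ} (hc : 0 ≤ c)
    (h : ∀ i j, |A i j| ≤ c * |B i j|) : ‖A‖ ≤ c * ‖B‖ := by
  have hAB : ‖A‖ ≤ ‖c • B‖ := by
    simp only [frobenius_norm_def, Matrix.smul_apply, smul_eq_mul, Real.norm_eq_abs, abs_mul,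
      abs_of_nonneg hc]
    gcongr with i _ j _
    exact h i j
  rwa [norm_smul, Real.norm_of_nonneg hc] at hAB

theorem frobenius_norm_mul_mul_transpose_of_orthogonal [DecidableEq ι] [DecidableEq κ]
    {O₁ : Matrix ι ι ℝ} {O₂ : Matrix κ κ ℝ} (h₁ : O₁ᵀ * O₁ = 1) (h₂ : O₂ᵀ * O₂ = 1)
    (A : Matrix ι κ ℝ) : ‖O₁ * A * O₂ᵀ‖ = ‖A‖ := by
  refine (sq_eq_sq₀ (norm_nonneg _) (norm_nonneg _)).mp ?_
  have : (O₁ * A * O₂ᵀ)ᵀ * (O₁ * A * O₂ᵀ) = O₂ * (Aᵀ * A) * O₂ᵀ := by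
    simp only [transpose_mul, transpose_transpose, Matrix.mul_assoc, ← Matrix.mul_assoc O₁ᵀ, h₁,
      Matrix.one_mul]
  rw [frobenius_norm_sq_eq_trace, frobenius_norm_sq_eq_trace, this, trace_mul_cycle, h₂,
    Matrix.one_mul]

end Frobenius

section ColProj

variable {ι κ : Type*} [Fintype ι] [Fintype κ] [DecidableEq κ]

/-- Orthogonal projection onto the column space of `M` (junk `0` when `Mᵀ * M` is singular). -/
noncomputable def colProj (M : Matrix ι κ ℝ) : Matrix ι ι ℝ := M * (Mᵀ * M)⁻¹ * Mᵀ

theorem transpose_colProj (M : Matrix ι κ ℝ) : (colProj M)ᵀ = colProj M := by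
  simp only [colProj, transpose_mul, transpose_transpose, transpose_nonsing_inv, Matrix.mul_assoc]

theorem colProj_mul_of_isUnit (M : Matrix ι κ ℝ) {Q : Matrix κ κ ℝ} (hQ : IsUnit Q) :
    colProj (M * Q) = colProj M := by
  have hQ' : IsUnit Qᵀ := (isUnit_transpose Q).mpr hQ
  rw [colProj, colProj, transpose_mul, show Qᵀ * Mᵀ * (M * Q) = Qᵀ * (Mᵀ * M) * Q by
      simp only [Matrix.mul_assoc], Matrix.mul_inv_rev, Matrix.mul_inv_rev]
  calc M * Q * (Q⁻¹ * ((Mᵀ * M)⁻¹ * Qᵀ⁻¹)) * (Qᵀ * Mᵀ)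
      = M * (Q * Q⁻¹) * (Mᵀ * M)⁻¹ * (Qᵀ⁻¹ * Qᵀ) * Mᵀ := by simp only [Matrix.mul_assoc]
    _ = M * (Mᵀ * M)⁻¹ * Mᵀ := by
      rw [mul_nonsing_inv _ ((isUnit_iff_isUnit_det Q).mp hQ),
        nonsing_inv_mul _ ((isUnit_iff_isUnit_det _).mp hQ'), Matrix.mul_one, Matrix.mul_one]

theorem colProj_orthogonal_mul [DecidableEq ι] {O : Matrix ι ι ℝ} (hO : Oᵀ * O = 1)
    (M : Matrix ι κ ℝ) : colProj (O * M) = O * colProj M * Oᵀ := by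
  rw [colProj, colProj, transpose_mul, Matrix.mul_assoc Mᵀ, ← Matrix.mul_assoc Oᵀ, hO,
    Matrix.one_mul]
  simp only [Matrix.mul_assoc]

theorem colProj_mul_self {M : Matrix ι κ ℝ} (hM : IsUnit (Mᵀ * M)) : colProj M * M = M := by
  rw [colProj, Matrix.mul_assoc, Matrix.mul_assoc,
    nonsing_inv_mul _ ((isUnit_iff_isUnit_det _).mp hM), Matrix.mul_one]

theorem colProj_mul_colProj {M : Matrix ι κ ℝ} (hM : IsUnit (Mᵀ * M)) :
    colProj M * colProj M = colProj M := by
  calc colProj M * colProj M = colProj M * M * ((Mᵀ * M)⁻¹ * Mᵀ) := by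
        simp only [colProj, Matrix.mul_assoc]
    _ = colProj M := by rw [colProj_mul_self hM, colProj, Matrix.mul_assoc]

theorem trace_colProj {M : Matrix ι κ ℝ} (hM : IsUnit (Mᵀ * M)) :
    trace (colProj M) = Fintype.card κ := by
  rw [colProj, trace_mul_cycle, mul_nonsing_inv _ ((isUnit_iff_isUnit_det _).mp hM), trace_one]

theorem isUnit_transpose_mul_self_of_left_inverse {M : Matrix ι κ ℝ} {L : Matrix κ ι ℝ}
    (hLM : L * M = 1) : IsUnit (Mᵀ * M) := by
  have hinj : Function.Injective M.mulVec := fun v w h => by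
    simpa [mulVec_mulVec, hLM] using congrArg (L *ᵥ ·) h
  simpa using (PosDef.conjTranspose_mul_self M hinj).isUnit

theorem norm_colProj_sub_mul_transpose_sq_le {M N : Matrix ι κ ℝ} (hN : Nᵀ * N = 1)
    (hNM : Nᵀ * M = 1) : ‖colProj M - N * Nᵀ‖ ^ 2 ≤ 2 * ‖M - N‖ ^ 2 := by
  have hM := isUnit_transpose_mul_self_of_left_inverse hNM
  have hPt := transpose_colProj M
  have hPM := colProj_mul_self hM
  have hPP := colProj_mul_colProj hM
  have htrP := trace_colProj hM
  set P := colProj M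
  obtain ⟨T, rfl⟩ : ∃ T, M = N + T := ⟨M - N, by abel⟩
  rw [add_sub_cancel_left]
  have hNT : Nᵀ * T = 0 := by rwa [Matrix.mul_add, hN, add_eq_left] at hNM
  -- `‖P - N Nᵀ‖² = tr P + tr (N Nᵀ) - 2 tr (Nᵀ P N)`, and `P (N + T) = N + T` determines `Nᵀ P N`
  have hPN : P * N = N + T - P * T := by rw [← hPM, Matrix.mul_add]; abel
  have hNPT : Nᵀ * P * T = Tᵀ * T - Tᵀ * P * T := by
    rw [← hPt, ← transpose_mul, hPN, hPt]
    simp only [transpose_sub, transpose_add, transpose_mul, hPt, Matrix.sub_mul, Matrix.add_mul,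
      hNT, zero_add, Matrix.mul_assoc]
  have hNPN : Nᵀ * P * N = 1 - (Tᵀ * T - Tᵀ * P * T) := by
    rw [Matrix.mul_assoc, hPN, Matrix.mul_sub, Matrix.mul_add, hN, hNT, add_zero,
      ← Matrix.mul_assoc, hNPT]
  have hPT : trace (Tᵀ * P * T) = ‖P * T‖ ^ 2 := by
    rw [frobenius_norm_sq_eq_trace, transpose_mul, hPt, Matrix.mul_assoc Tᵀ P (P * T),
      ← Matrix.mul_assoc P P T, hPP, Matrix.mul_assoc]
  have hsq : ‖P - N * Nᵀ‖ ^ 2 = 2 * ‖T‖ ^ 2 - 2 * ‖P * T‖ ^ 2 := by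
    have hQQ : N * Nᵀ * (N * Nᵀ) = N * Nᵀ := by
      rw [Matrix.mul_assoc, ← Matrix.mul_assoc Nᵀ, hN, Matrix.one_mul]
    rw [frobenius_norm_sq_eq_trace, frobenius_norm_sq_eq_trace, ← hPT, transpose_sub, hPt,
      transpose_mul, transpose_transpose, Matrix.sub_mul, Matrix.mul_sub, Matrix.mul_sub, hPP, hQQ]
    simp only [trace_sub]
    rw [trace_mul_comm (N * Nᵀ), ← Matrix.mul_assoc, trace_mul_comm (P * N), ← Matrix.mul_assoc,
      hNPN, htrP, trace_mul_comm N, hN]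
    simp only [trace_sub, trace_one]
    ring
  rw [hsq]
  linarith [sq_nonneg ‖P * T‖]

end ColProj

section RectDiagonal

variable {m n p : ℕ}

variable (m n) in
/-- `rectDiagonal m r 1` is `[I; 0]`, and `(rectDiagonal n r 1)ᵀ * X` is the top `r × r` block
of `X`. -/
def rectDiagonal (d : ℕ → ℝ) : Matrix (Fin m) (Fin n) ℝ :=
  of fun i j => if (i : ℕ) = j then d i else 0

theorem transpose_rectDiagonal (d : ℕ → ℝ) : (rectDiagonal m n d)ᵀ = rectDiagonal n m d := by
  ext i j
  simp only [rectDiagonal, transpose_apply, of_apply, eq_comm (a := (j : ℕ))]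
  split_ifs with h <;> simp [h]

theorem rectDiagonal_mul_apply {κ : Type*} (d : ℕ → ℝ) (X : Matrix (Fin n) κ ℝ) (i : Fin m)
    (l : κ) : (rectDiagonal m n d * X) i l = if h : (i : ℕ) < n then d i * X ⟨i, h⟩ l else 0 := by
  simp only [rectDiagonal, mul_apply, of_apply, ite_mul, zero_mul]
  split_ifs with h
  · rw [Finset.sum_eq_single ⟨i, h⟩] <;> simp +contextual [Fin.ext_iff, eq_comm]
  · exact Finset.sum_eq_zero fun j _ => if_neg fun hij : (i : ℕ) = j => h (hij ▸ j.isLt)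

theorem rectDiagonal_congr {d e : ℕ → ℝ} (h : ∀ i, i < m → i < n → d i = e i) :
    rectDiagonal m n d = rectDiagonal m n e := by
  ext i j
  simp only [rectDiagonal, of_apply]
  split_ifs with hij
  · exact h i i.isLt (hij ▸ j.isLt)
  · rfl

theorem rectDiagonal_mul_rectDiagonal (d e : ℕ → ℝ) :
    rectDiagonal m n d * rectDiagonal n p e =
      rectDiagonal m p fun i => if i < n then d i * e i else 0 := by
  ext i j
  rw [rectDiagonal_mul_apply]
  simp only [rectDiagonal, of_apply]
  split_ifs <;> simp_all

theorem rectDiagonal_eq_diagonal (d : ℕ → ℝ) :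
    rectDiagonal n n d = diagonal fun i : Fin n => d i := by
  ext i j
  simp [rectDiagonal, diagonal_apply, Fin.ext_iff]

theorem rectDiagonal_mul_transpose_mul_self_pow (d : ℕ → ℝ) (k : ℕ) :
    rectDiagonal m n d * ((rectDiagonal m n d)ᵀ * rectDiagonal m n d) ^ k =
      rectDiagonal m n fun i => d i ^ (2 * k + 1) := by
  induction k with
  | zero => simp
  | succ k ih =>
    rw [pow_succ, ← Matrix.mul_assoc, ih, transpose_rectDiagonal, ← Matrix.mul_assoc,
      rectDiagonal_mul_rectDiagonal, rectDiagonal_mul_rectDiagonal]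
    exact rectDiagonal_congr fun i hm hn => by simp only [hm, hn, if_true]; ring

theorem rectDiagonal_one_transpose_mul_self {r : ℕ} (hrm : r ≤ m) :
    (rectDiagonal m r 1)ᵀ * rectDiagonal m r 1 = 1 := by
  rw [transpose_rectDiagonal, rectDiagonal_mul_rectDiagonal,
    rectDiagonal_congr (e := 1) fun i hi _ => by simp [hi.trans_le hrm], rectDiagonal_eq_diagonal]
  exact diagonal_one

theorem rectDiagonal_one_mul_transpose_mul_rectDiagonal (r : ℕ) (d : ℕ → ℝ) :
    rectDiagonal m r 1 * (rectDiagonal m r 1)ᵀ * rectDiagonal m n d =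
      (of fun i j => if (i : ℕ) = j ∧ (i : ℕ) < r then d i else 0 : Matrix (Fin m) (Fin n) ℝ) := by
  rw [transpose_rectDiagonal, rectDiagonal_mul_rectDiagonal, rectDiagonal_mul_rectDiagonal]
  ext i j
  simp only [rectDiagonal, of_apply, Pi.one_apply, one_mul]
  split_ifs <;> grind

end RectDiagonal

theorem rectDiagonal_one_mulVec_apply {n r : ℕ} (y : Fin n → ℝ) (l : Fin r) (h : (l : ℕ) < n) :
    (rectDiagonal r n 1 *ᵥ y) l = y ⟨l, h⟩ := by
  rw [mulVec, dotProduct, Finset.sum_eq_single ⟨l, h⟩] <;>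
    simp +contextual [rectDiagonal, Fin.ext_iff, eq_comm]

theorem isUnit_top_rows_of_inf_span_eq_bot {n r : ℕ} {O : Matrix (Fin n) (Fin n) ℝ}
    (hO : O * Oᵀ = 1) {B : Matrix (Fin n) (Fin r) ℝ} (hB : IsUnit (Bᵀ * B))
    (h : colSpace B ⊓ Submodule.span ℝ {v | ∃ j : Fin n, r ≤ (j : ℕ) ∧ v = fun i => O i j} = ⊥) :
    IsUnit ((rectDiagonal n r 1)ᵀ * (Oᵀ * B)) := by
  rw [isUnit_iff_isUnit_det, isUnit_iff_ne_zero]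
  intro hdet
  obtain ⟨c, hc0, hc⟩ := exists_mulVec_eq_zero_iff.mpr hdet
  have hBc : B *ᵥ c ≠ 0 := fun h0 => hc0 <| mulVec_injective_iff_isUnit.mpr hB <| by
    rw [← mulVec_mulVec, h0, mulVec_zero, mulVec_zero]
  have hcol : B *ᵥ c ∈ colSpace B := by
    rw [colSpace, show Set.range Bᵀ = Set.range B.col from rfl, ← range_mulVecLin]
    exact ⟨c, rfl⟩
  set y := Oᵀ *ᵥ (B *ᵥ c)
  have hy : ∀ j : Fin n, (j : ℕ) < r → y j = 0 := fun j hj => by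
    have hcj := congrFun hc ⟨j, hj⟩
    rw [transpose_rectDiagonal, ← mulVec_mulVec, ← mulVec_mulVec,
      rectDiagonal_one_mulVec_apply _ ⟨j, hj⟩ j.isLt] at hcj
    exact hcj
  have htail : B *ᵥ c ∈ Submodule.span ℝ {v | ∃ j : Fin n, r ≤ (j : ℕ) ∧ v = fun i => O i j} := by
    have hBy : B *ᵥ c = ∑ j, y j • fun i => O i j := by
      rw [show B *ᵥ c = O *ᵥ y by simp [y, mulVec_mulVec, hO, ← Matrix.mul_assoc]]
      ext i
      simp [mulVec, dotProduct, mul_comm]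
    rw [hBy]
    refine Submodule.sum_mem _ fun j _ => ?_
    by_cases hj : r ≤ (j : ℕ)
    · exact Submodule.smul_mem _ _ (Submodule.subset_span ⟨j, hj, rfl⟩)
    · rw [hy j (not_le.mp hj), zero_smul]
      exact Submodule.zero_mem _
  exact hBc ((Submodule.mem_bot ℝ).mp (h ▸ Submodule.mem_inf.mpr ⟨hcol, htail⟩))

theorem abs_rectDiagonal_pow_mul_mul_inv_sub_le {m n r : ℕ} {d : ℕ → ℝ} {ρ : ℝ}
    (hρ : 0 ≤ ρ) (hpos : ∀ l < r, 0 < d l) (hratio : ∀ i l, l < r → r ≤ i → |d i| ≤ ρ * d l)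
    {G : Matrix (Fin n) (Fin r) ℝ} (hG : (rectDiagonal n r 1)ᵀ * G = 1) (p : ℕ) (i : Fin m)
    (l : Fin r) :
    |(rectDiagonal m n (fun i => d i ^ p) * G * rectDiagonal r r (fun l => (d l ^ p)⁻¹) -
        rectDiagonal m r 1) i l| ≤ ρ ^ p * |(rectDiagonal m n 1 * G) i l| := by
  have hl : d l ^ p ≠ 0 := pow_ne_zero p (hpos l l.isLt).ne'
  rw [Matrix.sub_apply, rectDiagonal_eq_diagonal, mul_diagonal, rectDiagonal_mul_apply,
    rectDiagonal_mul_apply]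
  by_cases hir : (i : ℕ) < r
  · have hGi := congrFun (congrFun hG ⟨i, hir⟩) l
    rw [transpose_rectDiagonal, rectDiagonal_mul_apply, one_apply] at hGi
    suffices h0 : (if h : (i : ℕ) < n then d i ^ p * G ⟨i, h⟩ l else 0) * (d l ^ p)⁻¹ =
        rectDiagonal m r 1 i l by
      rw [h0, sub_self, abs_zero]; positivity
    simp only [rectDiagonal, of_apply]
    split_ifs at hGi ⊢ with hn hil hil' hil' <;> simp_all [Fin.ext_iff]
  · have hN : rectDiagonal m r 1 i l = 0 := if_neg fun h : (i : ℕ) = l => hir (h ▸ l.isLt)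
    rw [hN, sub_zero]
    split_ifs with hn
    · rw [Pi.one_apply, one_mul, abs_mul, abs_mul,
        abs_of_pos (inv_pos.mpr (pow_pos (hpos l l.isLt) p)), abs_pow, mul_right_comm,
        ← div_eq_mul_inv]
      gcongr
      rw [div_le_iff₀ (pow_pos (hpos l l.isLt) p), ← mul_pow]
      exact pow_le_pow_left₀ (abs_nonneg _) (hratio i l l.isLt (not_lt.mp hir)) p
    · simp

theorem norm_colProj_rectDiagonal_mul_sub_le {m n r : ℕ} (hrm : r ≤ m) {d : ℕ → ℝ} {ρ : ℝ}
    (hρ : 0 ≤ ρ) (hpos : ∀ l < r, 0 < d l) (hratio : ∀ i l, l < r → r ≤ i → |d i| ≤ ρ * d l)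
    {X : Matrix (Fin n) (Fin r) ℝ} (hX : IsUnit ((rectDiagonal n r 1)ᵀ * X)) (p : ℕ) :
    ‖colProj (rectDiagonal m n (fun i => d i ^ p) * X) - rectDiagonal m r 1 * (rectDiagonal m r 1)ᵀ‖
      ≤ √2 * (ρ ^ p * ‖rectDiagonal m n 1 * (X * ((rectDiagonal n r 1)ᵀ * X)⁻¹)‖) := by
  set X₀ := (rectDiagonal n r 1)ᵀ * X
  set G := X * X₀⁻¹
  set N := rectDiagonal m r 1
  set D := rectDiagonal r r fun l => d l ^ p
  set D' := rectDiagonal r r fun l => (d l ^ p)⁻¹ with hD'def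
  have hD' : IsUnit D' := by
    rw [hD'def, rectDiagonal_eq_diagonal, isUnit_diagonal, Pi.isUnit_iff]
    exact fun l => (inv_ne_zero (pow_ne_zero _ (hpos l l.isLt).ne')).isUnit
  have hDD' : D * D' = 1 := by
    rw [hD'def, rectDiagonal_mul_rectDiagonal, rectDiagonal_congr (e := 1) fun i hi _ => by
      simp [hi, (pow_ne_zero p (hpos i hi).ne')], rectDiagonal_eq_diagonal]
    exact diagonal_one
  have hNS : Nᵀ * rectDiagonal m n (fun i => d i ^ p) = D * (rectDiagonal n r 1)ᵀ := by
    rw [transpose_rectDiagonal, transpose_rectDiagonal, rectDiagonal_mul_rectDiagonal,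
      rectDiagonal_mul_rectDiagonal]
    exact rectDiagonal_congr fun i hi _ => by simp [hi, hi.trans_le hrm]
  have hG : (rectDiagonal n r 1)ᵀ * G = 1 := by
    rw [← Matrix.mul_assoc]
    exact mul_nonsing_inv _ ((isUnit_iff_isUnit_det _).mp hX)
  have hproj : colProj (rectDiagonal m n (fun i => d i ^ p) * X) =
      colProj (rectDiagonal m n (fun i => d i ^ p) * G * D') := by
    rw [← colProj_mul_of_isUnit _ ((isUnit_nonsing_inv_iff.mpr hX).mul hD')]
    simp only [G, Matrix.mul_assoc]
  set M := rectDiagonal m n (fun i => d i ^ p) * G * D'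
  have hNM : Nᵀ * M = 1 := by
    rw [← Matrix.mul_assoc, ← Matrix.mul_assoc, hNS, Matrix.mul_assoc D, hG, Matrix.mul_one, hDD']
  rw [hproj]
  calc ‖colProj M - N * Nᵀ‖ ≤ √2 * ‖M - N‖ := by
        rw [← Real.sqrt_sq (norm_nonneg _), ← Real.sqrt_sq (norm_nonneg (M - N)),
          ← Real.sqrt_mul zero_le_two]
        exact Real.sqrt_le_sqrt
          (norm_colProj_sub_mul_transpose_sq_le (rectDiagonal_one_transpose_mul_self hrm) hNM)
    _ ≤ _ := by
      gcongr
      exact frobenius_norm_le_of_abs_le (pow_nonneg hρ p)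
        (abs_rectDiagonal_pow_mul_mul_inv_sub_le hρ hpos hratio hG p)

section ALS

variable {ι κ τ : Type*} [Fintype ι] [Fintype τ] [DecidableEq τ]
  {W : Matrix ι κ ℝ} {U : ℕ → Matrix ι τ ℝ} {V : ℕ → Matrix κ τ ℝ}

theorem als_mul_transpose_eq_colProj_mul
    (hVrec : ∀ k, V (k + 1) = Wᵀ * U (k + 1) * ((U (k + 1))ᵀ * U (k + 1))⁻¹) (k : ℕ) :
    U (k + 1) * (V (k + 1))ᵀ = colProj (U (k + 1)) * W := by
  rw [hVrec, colProj]
  simp only [transpose_mul, transpose_nonsing_inv, transpose_transpose, Matrix.mul_assoc]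

variable [Fintype κ] [DecidableEq κ]

theorem als_right_iterate_eq
    (hVGram : ∀ k, IsUnit ((V k)ᵀ * V k)) (hUGram : ∀ k, IsUnit ((U (k + 1))ᵀ * U (k + 1)))
    (hUrec : ∀ k, U (k + 1) = W * V k * ((V k)ᵀ * V k)⁻¹)
    (hVrec : ∀ k, V (k + 1) = Wᵀ * U (k + 1) * ((U (k + 1))ᵀ * U (k + 1))⁻¹) (k : ℕ) :
    ∃ R : Matrix τ τ ℝ, IsUnit R ∧ V k = (Wᵀ * W) ^ k * V 0 * R := by
  induction k with
  | zero => exact ⟨1, isUnit_one, by simp⟩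
  | succ k ih =>
    obtain ⟨R, hR, hVk⟩ := ih
    refine ⟨R * (((V k)ᵀ * V k)⁻¹ * ((U (k + 1))ᵀ * U (k + 1))⁻¹),
      hR.mul ((isUnit_nonsing_inv_iff.mpr (hVGram k)).mul
        (isUnit_nonsing_inv_iff.mpr (hUGram k))), ?_⟩
    rw [hVrec, pow_succ']
    nth_rewrite 1 [hUrec, hVk]
    simp only [Matrix.mul_assoc]

theorem als_left_iterate_eq
    (hVGram : ∀ k, IsUnit ((V k)ᵀ * V k)) (hUGram : ∀ k, IsUnit ((U (k + 1))ᵀ * U (k + 1)))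
    (hUrec : ∀ k, U (k + 1) = W * V k * ((V k)ᵀ * V k)⁻¹)
    (hVrec : ∀ k, V (k + 1) = Wᵀ * U (k + 1) * ((U (k + 1))ᵀ * U (k + 1))⁻¹) (k : ℕ) :
    ∃ R : Matrix τ τ ℝ, IsUnit R ∧ U (k + 1) = W * (Wᵀ * W) ^ k * V 0 * R := by
  obtain ⟨R, hR, hVk⟩ := als_right_iterate_eq hVGram hUGram hUrec hVrec k
  refine ⟨R * ((V k)ᵀ * V k)⁻¹, hR.mul (isUnit_nonsing_inv_iff.mpr (hVGram k)), ?_⟩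
  nth_rewrite 1 [hUrec, hVk]
  simp only [Matrix.mul_assoc]

theorem als_mul_transpose_eq
    (hVGram : ∀ k, IsUnit ((V k)ᵀ * V k)) (hUGram : ∀ k, IsUnit ((U (k + 1))ᵀ * U (k + 1)))
    (hUrec : ∀ k, U (k + 1) = W * V k * ((V k)ᵀ * V k)⁻¹)
    (hVrec : ∀ k, V (k + 1) = Wᵀ * U (k + 1) * ((U (k + 1))ᵀ * U (k + 1))⁻¹) (k : ℕ) :
    U (k + 1) * (V (k + 1))ᵀ = colProj (W * (Wᵀ * W) ^ k * V 0) * W := by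
  obtain ⟨R, hR, hUk⟩ := als_left_iterate_eq hVGram hUGram hUrec hVrec k
  rw [als_mul_transpose_eq_colProj_mul hVrec, hUk, colProj_mul_of_isUnit _ hR]

end ALS

theorem mul_transpose_mul_self_pow_of_orthogonal {ι κ : Type*} [Fintype ι] [Fintype κ]
    [DecidableEq ι] [DecidableEq κ] {O₁ : Matrix ι ι ℝ} {O₂ : Matrix κ κ ℝ}
    (h₁ : O₁ᵀ * O₁ = 1) (h₂ : O₂ᵀ * O₂ = 1) (S : Matrix ι κ ℝ) (k : ℕ) :
    O₁ * S * O₂ᵀ * ((O₁ * S * O₂ᵀ)ᵀ * (O₁ * S * O₂ᵀ)) ^ k = O₁ * (S * (Sᵀ * S) ^ k) * O₂ᵀ := by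
  induction k with
  | zero => simp
  | succ k ih =>
    rw [pow_succ, ← Matrix.mul_assoc, ih]
    simp only [transpose_mul, transpose_transpose, Matrix.mul_assoc, pow_succ]
    rw [← Matrix.mul_assoc O₂ᵀ O₂, h₂, Matrix.one_mul, ← Matrix.mul_assoc O₁ᵀ O₁, h₁,
      Matrix.one_mul]

theorem norm_als_sub_le_of_svd {ι κ τ : Type*} [Fintype ι] [Fintype κ] [Fintype τ]
    [DecidableEq ι] [DecidableEq κ] [DecidableEq τ] {O₁ : Matrix ι ι ℝ} {O₂ : Matrix κ κ ℝ}
    (h₁ : O₁ᵀ * O₁ = 1) (h₂ : O₂ᵀ * O₂ = 1) {S : Matrix ι κ ℝ} {U : ℕ → Matrix ι τ ℝ}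
    {V : ℕ → Matrix κ τ ℝ}
    (hVGram : ∀ k, IsUnit ((V k)ᵀ * V k)) (hUGram : ∀ k, IsUnit ((U (k + 1))ᵀ * U (k + 1)))
    (hUrec : ∀ k, U (k + 1) = O₁ * S * O₂ᵀ * V k * ((V k)ᵀ * V k)⁻¹)
    (hVrec : ∀ k, V (k + 1) =
      (O₁ * S * O₂ᵀ)ᵀ * U (k + 1) * ((U (k + 1))ᵀ * U (k + 1))⁻¹) (A : Matrix ι ι ℝ) (k : ℕ) :
    ‖U (k + 1) * (V (k + 1))ᵀ - O₁ * (A * S) * O₂ᵀ‖ ≤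
      ‖colProj (S * (Sᵀ * S) ^ k * (O₂ᵀ * V 0)) - A‖ * ‖S‖ := by
  rw [als_mul_transpose_eq hVGram hUGram hUrec hVrec,
    mul_transpose_mul_self_pow_of_orthogonal h₁ h₂,
    show O₁ * (S * (Sᵀ * S) ^ k) * O₂ᵀ * V 0 = O₁ * (S * (Sᵀ * S) ^ k * (O₂ᵀ * V 0)) by
      simp only [Matrix.mul_assoc], colProj_orthogonal_mul h₁]
  set P := colProj (S * (Sᵀ * S) ^ k * (O₂ᵀ * V 0))
  have hdiff :
      O₁ * P * O₁ᵀ * (O₁ * S * O₂ᵀ) - O₁ * (A * S) * O₂ᵀ = O₁ * ((P - A) * S) * O₂ᵀ := by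
    rw [Matrix.sub_mul, Matrix.mul_sub, Matrix.sub_mul]
    simp only [Matrix.mul_assoc, ← Matrix.mul_assoc O₁ᵀ O₁, h₁, Matrix.one_mul]
  rw [hdiff, frobenius_norm_mul_mul_transpose_of_orthogonal h₁ h₂]
  exact frobenius_norm_mul _ _

theorem exists_sq_le_mul_pow_of_succ_le {a : ℕ → ℝ} {c ρ : ℝ} (ha : ∀ k, 0 ≤ a k) (hρ0 : 0 ≤ ρ)
    (hρ1 : ρ ≤ 1) (h : ∀ k, a (k + 1) ≤ c * ρ ^ (2 * k + 1)) :
    ∃ C > 0, ∀ k, a k ^ 2 ≤ C * ρ ^ (2 * k) := by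
  refine ⟨a 0 ^ 2 + c ^ 2 + 1, by positivity, fun k => ?_⟩
  cases k with
  | zero => simp only [mul_zero, pow_zero, mul_one]; nlinarith [sq_nonneg c]
  | succ k =>
    calc a (k + 1) ^ 2 ≤ (c * ρ ^ (2 * k + 1)) ^ 2 := pow_le_pow_left₀ (ha _) (h k) 2
      _ = c ^ 2 * ρ ^ (2 * (k + 1)) * ρ ^ (2 * k) := by ring
      _ ≤ c ^ 2 * ρ ^ (2 * (k + 1)) * 1 := by gcongr; exact pow_le_one₀ hρ0 hρ1
      _ ≤ (a 0 ^ 2 + c ^ 2 + 1) * ρ ^ (2 * (k + 1)) := by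
        rw [mul_one]; gcongr; nlinarith [sq_nonneg (a 0)]

theorem tendsto_of_norm_sub_sq_le {E : Type*} [SeminormedAddCommGroup E] {f : ℕ → E} {x : E}
    {C ρ : ℝ} (hρ0 : 0 ≤ ρ) (hρ1 : ρ < 1) (h : ∀ k, ‖f k - x‖ ^ 2 ≤ C * ρ ^ (2 * k)) :
    Tendsto f atTop (nhds x) := by
  refine tendsto_iff_norm_sub_tendsto_zero.mpr (squeeze_zero (fun _ => norm_nonneg _) (fun k => ?_)
    (by simpa using (tendsto_pow_atTop_nhds_zero_of_lt_one hρ0 hρ1).const_mul √C))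
  calc ‖f k - x‖ = √(‖f k - x‖ ^ 2) := (Real.sqrt_sq (norm_nonneg _)).symm
    _ ≤ √(C * (ρ ^ k) ^ 2) := Real.sqrt_le_sqrt (by rw [← pow_mul, mul_comm k]; exact h k)
    _ = √C * ρ ^ k := by rw [Real.sqrt_mul' _ (sq_nonneg _), Real.sqrt_sq (pow_nonneg hρ0 k)]

theorem abs_le_div_mul_of_antitone {σ : ℕ → ℝ} (hσ : ∀ i, 0 ≤ σ i) (hanti : Antitone σ)
    {r i l : ℕ} (hσr : 0 < σ r) (hl : l < r) (hi : r ≤ i) :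
    |σ (i + 1)| ≤ σ (r + 1) / σ r * σ (l + 1) := by
  rw [abs_of_nonneg (hσ _)]
  calc σ (i + 1) ≤ σ (r + 1) := hanti (by omega)
    _ = σ (r + 1) / σ r * σ r := (div_mul_cancel₀ _ hσr.ne').symm
    _ ≤ σ (r + 1) / σ r * σ (l + 1) := by gcongr; exacts [div_nonneg (hσ _) hσr.le, hanti hl]

/-- Singular values are 1-indexed: `σ (i+1)` sits at diagonal position `i`. -/
theorem als_subspace_iteration_convergence {m n r : ℕ} (hr : r ≤ min m n)
    (Wbar : Matrix (Fin m) (Fin n) ℝ)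
    (Usv : Matrix (Fin m) (Fin m) ℝ) (Vsv : Matrix (Fin n) (Fin n) ℝ)
    (σ : ℕ → ℝ)
    (hUsv : Usvᵀ * Usv = 1) (hVsv : Vsvᵀ * Vsv = 1)
    (hσnonneg : ∀ i, 0 ≤ σ i) (hσmono : ∀ i, σ (i + 1) ≤ σ i)
    (hgap : σ (r + 1) < σ r)
    (hW : Wbar = Usv * (Matrix.of fun (i : Fin m) (j : Fin n) =>
        if (i : ℕ) = (j : ℕ) then σ ((i : ℕ) + 1) else 0) * Vsvᵀ)
    (U : ℕ → Matrix (Fin m) (Fin r) ℝ) (V : ℕ → Matrix (Fin n) (Fin r) ℝ)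
    (hVGram : ∀ k, IsUnit ((V k)ᵀ * V k))
    (hUGram : ∀ k, IsUnit ((U (k + 1))ᵀ * U (k + 1)))
    (hUrec : ∀ k, U (k + 1) = Wbar * V k * ((V k)ᵀ * V k)⁻¹)
    (hVrec : ∀ k, V (k + 1) = Wbarᵀ * U (k + 1) * ((U (k + 1))ᵀ * U (k + 1))⁻¹)
    (hwarm : colSpace (V 0) ⊓ Submodule.span ℝ
        {v : Fin n → ℝ | ∃ j : Fin n, r ≤ (j : ℕ) ∧ v = fun i => Vsv i j} = ⊥) :
    (∃ C > (0 : ℝ), ∀ k : ℕ,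
      froSq (U k * (V k)ᵀ - Usv * (Matrix.of fun (i : Fin m) (j : Fin n) =>
          if (i : ℕ) = (j : ℕ) ∧ (i : ℕ) < r then σ ((i : ℕ) + 1) else 0) * Vsvᵀ)
        ≤ C * (σ (r + 1) / σ r) ^ (2 * k))
    ∧ Filter.Tendsto
        (fun k : ℕ => U k * (V k)ᵀ)
        Filter.atTop
        (nhds (Usv * (Matrix.of fun (i : Fin m) (j : Fin n) =>
          if (i : ℕ) = (j : ℕ) ∧ (i : ℕ) < r then σ ((i : ℕ) + 1) else 0) * Vsvᵀ)) := by
  subst hW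
  have hσr : 0 < σ r := (hσnonneg _).trans_lt hgap
  have hanti : Antitone σ := antitone_nat_of_succ_le hσmono
  set ρ := σ (r + 1) / σ r
  have hρ0 : 0 ≤ ρ := div_nonneg (hσnonneg _) hσr.le
  have hρ1 : ρ < 1 := (div_lt_one hσr).mpr hgap
  have hX := isUnit_top_rows_of_inf_span_eq_bot (mul_eq_one_comm.mp hVsv) (hVGram 0) hwarm
  rw [← rectDiagonal_one_mul_transpose_mul_rectDiagonal r fun i => σ (i + 1)]
  set S := rectDiagonal m n fun i => σ (i + 1)
  set N := rectDiagonal m r 1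
  set g := ‖rectDiagonal m n 1 * (Vsvᵀ * V 0 * ((rectDiagonal n r 1)ᵀ * (Vsvᵀ * V 0))⁻¹)‖
  have hstep : ∀ k, ‖U (k + 1) * (V (k + 1))ᵀ - Usv * (N * Nᵀ * S) * Vsvᵀ‖ ≤
      √2 * g * ‖S‖ * ρ ^ (2 * k + 1) := fun k => by
    calc _ ≤ ‖colProj (S * (Sᵀ * S) ^ k * (Vsvᵀ * V 0)) - N * Nᵀ‖ * ‖S‖ :=
          norm_als_sub_le_of_svd hUsv hVsv hVGram hUGram hUrec hVrec _ k
      _ ≤ √2 * (ρ ^ (2 * k + 1) * g) * ‖S‖ := by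
        rw [rectDiagonal_mul_transpose_mul_self_pow]
        gcongr
        exact norm_colProj_rectDiagonal_mul_sub_le (hr.trans (min_le_left _ _)) hρ0
          (fun l hl => hσr.trans_le (hanti hl))
          (fun i l hl hi => abs_le_div_mul_of_antitone hσnonneg hanti hσr hl hi) hX (2 * k + 1)
      _ = √2 * g * ‖S‖ * ρ ^ (2 * k + 1) := by ring
  obtain ⟨C, hC, hbound⟩ :=
    exists_sq_le_mul_pow_of_succ_le (a := fun k => ‖U k * (V k)ᵀ - Usv * (N * Nᵀ * S) * Vsvᵀ‖)
      (fun k => norm_nonneg _) hρ0 hρ1.le hstep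
  exact ⟨⟨C, hC, fun k => (froSq_eq_norm_sq _).trans_le (hbound k)⟩,
    tendsto_of_norm_sub_sq_le hρ0 hρ1 hbound⟩
end
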